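/- Let e be a total relational empirical model (for every m̄ ∈ M there exists ō with e(m̄,ō)). Then e is realized by some relational hidden-variable model satisfying λ-Independence and Locality if and only if e is a union of total strongly deterministic models, i.e. there exists a family of functions (f_λ)_{λ∈Λ}, where each f_λ = ∏_{i=1}^n f_{λ,i} with f_{λ,i} : M_i → O_i, such that e(m̄,ō) holds if and only if there exists λ with f_λ(m̄) = ō and the graph of each f_λ is contained in e. -/

import Mathlib

/-!
Forward direction: by λ-Independence and totality of `e`, every hidden variable `λ` that occurs
at all is defined at every measurement context. Hence any outcome `ō` seen at `(m̄, λ)` can be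
extended, one party at a time, to local response functions `g_i : M_i → O_i` whose values are
all marginals of `h(·, ·, λ)`; Locality then puts the whole graph of `g` into `h(·, ·, λ)`.
The pairs `(λ, g)` obtained this way index deterministic models covering `e`.
Converse: a family of functions is itself a local, λ-independent hidden-variable model.
-/

/-- `h m o l` reads `h(m̄, ō, λ)`. -/
abbrev HiddenVariableModel {ι : Type*} (M O : ι → Type*) (Λ : Type*) : Type _ :=
  (∀ i, M i) → (∀ i, O i) → Λ → Prop

namespace HiddenVariableModel

variable {ι : Type*} {M O : ι → Type*} {Λ : Type*} (h : HiddenVariableModel M O Λ)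

def DefinedAt (m : ∀ i, M i) (l : Λ) : Prop := ∃ o, h m o l

/-- `h(m, o, λ)↓` for a single party `i`, `m ∈ M_i`, `o ∈ O_i`. -/
def MarginalDefinedAt (l : Λ) (i : ι) (mi : M i) (oi : O i) : Prop :=
  ∃ m o, m i = mi ∧ o i = oi ∧ h m o l

def LambdaIndependent : Prop :=
  ∀ (m m' : ∀ i, M i) (l : Λ), (∃ o l', h m' o l') → h.DefinedAt m l → h.DefinedAt m' l

def Local : Prop :=
  ∀ (m : ∀ i, M i) (o : ∀ i, O i) (l : Λ), h.DefinedAt m l →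
    (∀ i, h.MarginalDefinedAt l i (m i) (o i)) → h m o l

def Realizes (e : (∀ i, M i) → (∀ i, O i) → Prop) : Prop :=
  ∀ m o, e m o ↔ ∃ l, h m o l

def ofFunctions (f : Λ → ∀ i, M i → O i) : HiddenVariableModel M O Λ :=
  fun m o l => (fun i => f l i (m i)) = o

def DeterministicCover : Type _ :=
  {p : Λ × (∀ i, M i → O i) // ∀ m, h m (fun i => p.2 i (m i)) p.1}

variable {h}

theorem LambdaIndependent.definedAt {e : (∀ i, M i) → (∀ i, O i) → Prop}
    (hI : h.LambdaIndependent) (hR : h.Realizes e) (htot : ∀ m, ∃ o, e m o)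
    {m₀ : ∀ i, M i} {l : Λ} (h₀ : h.DefinedAt m₀ l) (m : ∀ i, M i) : h.DefinedAt m l := by
  obtain ⟨o, he⟩ := htot m
  obtain ⟨l', hl'⟩ := (hR m o).mp he
  exact hI m₀ m l ⟨o, l', hl'⟩ h₀

theorem exists_marginalDefinedAt {l : Λ} (hdef : ∀ m, h.DefinedAt m l) (m₀ : ∀ i, M i)
    (i : ι) (mi : M i) : ∃ oi, h.MarginalDefinedAt l i mi oi := by
  classical
  obtain ⟨o, ho⟩ := hdef (Function.update m₀ i mi)
  exact ⟨o i, _, o, by simp, rfl, ho⟩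

theorem exists_responses_extending {l : Λ} (hdef : ∀ m, h.DefinedAt m l)
    {m : ∀ i, M i} {o : ∀ i, O i} (hmo : h m o l) :
    ∃ g : ∀ i, M i → O i, (fun i => g i (m i)) = o ∧
      ∀ i mi, h.MarginalDefinedAt l i mi (g i mi) := by
  have hchoice : ∀ i mi, ∃ oi, (mi = m i → oi = o i) ∧ h.MarginalDefinedAt l i mi oi := by
    intro i mi
    by_cases hmi : mi = m i
    · exact ⟨o i, fun _ => rfl, m, o, hmi.symm, rfl, hmo⟩
    · obtain ⟨oi, hoi⟩ := exists_marginalDefinedAt hdef m i mi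
      exact ⟨oi, fun heq => absurd heq hmi, hoi⟩
  choose g hgm hg using hchoice
  exact ⟨g, funext fun i => hgm i (m i) rfl, hg⟩

theorem Local.graph_subset {l : Λ} (hL : h.Local) (hdef : ∀ m, h.DefinedAt m l)
    {g : ∀ i, M i → O i} (hg : ∀ i mi, h.MarginalDefinedAt l i mi (g i mi)) (m : ∀ i, M i) :
    h m (fun i => g i (m i)) l :=
  hL m _ l (hdef m) fun i => hg i (m i)

theorem realizes_deterministicCover {e : (∀ i, M i) → (∀ i, O i) → Prop}
    (hI : h.LambdaIndependent) (hL : h.Local) (hR : h.Realizes e) (htot : ∀ m, ∃ o, e m o) :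
    (ofFunctions fun p : DeterministicCover h => p.1.2).Realizes e := by
  intro m o
  constructor
  · intro he
    obtain ⟨l, hl⟩ := (hR m o).mp he
    have hdef := hI.definedAt hR htot ⟨o, hl⟩
    obtain ⟨g, rfl, hg⟩ := exists_responses_extending hdef hl
    exact ⟨⟨(l, g), hL.graph_subset hdef hg⟩, rfl⟩
  · rintro ⟨⟨⟨l, g⟩, hgraph⟩, rfl⟩
    exact (hR _ _).mpr ⟨l, hgraph m⟩

theorem ofFunctions_lambdaIndependent (f : Λ → ∀ i, M i → O i) :
    (ofFunctions f).LambdaIndependent :=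
  fun _ _ _ _ _ => ⟨_, rfl⟩

theorem ofFunctions_local (f : Λ → ∀ i, M i → O i) : (ofFunctions f).Local := by
  intro m o l _ hmarg
  funext i
  obtain ⟨m', o', hm', ho', hh⟩ := hmarg i
  rw [← ho', ← hm', ← hh]

end HiddenVariableModel

open HiddenVariableModel in
theorem stmt_18_general {n : ℕ} (M O : Fin n → Type)
    (e : (∀ i, M i) → (∀ i, O i) → Prop)
    -- e is total
    (htot : ∀ m : ∀ i, M i, ∃ o : ∀ i, O i, e m o) :
    -- e is realized by a hidden-variable model satisfying λI and L
    (∃ (Λ : Type) (h : (∀ i, M i) → (∀ i, O i) → Λ → Prop),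
      -- λ-Independence
      (∀ (m m' : ∀ j, M j) (l : Λ),
          (∃ (ob : ∀ j, O j) (l' : Λ), h m' ob l') →
          (∃ ob : ∀ j, O j, h m ob l) →
          ∃ ob : ∀ j, O j, h m' ob l) ∧
      -- Locality
      (∀ (m : ∀ j, M j) (o : ∀ j, O j) (l : Λ),
          (∃ ob : ∀ j, O j, h m ob l) →
          (∀ i : Fin n, ∃ (m' : ∀ j, M j) (o' : ∀ j, O j),
              m' i = m i ∧ o' i = o i ∧ h m' o' l) →
          h m o l) ∧
      -- h realizes e
      (∀ (m : ∀ j, M j) (o : ∀ j, O j), e m o ↔ ∃ l : Λ, h m o l))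
    ↔
    -- e is a union of total strongly deterministic models
    (∃ (Λ : Type) (f : Λ → ∀ i, M i → O i),
      (∀ (m : ∀ i, M i) (o : ∀ i, O i),
          e m o ↔ ∃ l : Λ, (fun i => f l i (m i)) = o) ∧
      -- the graph of each f_λ is contained in e
      (∀ (l : Λ) (m : ∀ i, M i), e m (fun i => f l i (m i)))) := by
  constructor
  · rintro ⟨Λ, h, hI, hL, hR⟩
    have hcover := realizes_deterministicCover (h := h) hI hL hR htot
    exact ⟨DeterministicCover h, fun p => p.1.2, hcover, fun p m => (hcover _ _).mpr ⟨p, rfl⟩⟩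
  · rintro ⟨Λ, f, hR, -⟩
    exact ⟨Λ, ofFunctions f, ofFunctions_lambdaIndependent f, ofFunctions_local f, hR⟩

/-- A total relational empirical model is realized by some hidden-variable
model satisfying λ-Independence and Locality iff it is a union of total
strongly deterministic models. -/
theorem stmt_18 {n : ℕ} (hn : 1 ≤ n) (M O : Fin n → Type)
    (e : (∀ i, M i) → (∀ i, O i) → Prop)
    -- e is total
    (htot : ∀ m : ∀ i, M i, ∃ o : ∀ i, O i, e m o) :
    -- e is realized by a hidden-variable model satisfying λI and L
    (∃ (Λ : Type) (h : (∀ i, M i) → (∀ i, O i) → Λ → Prop),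
      -- λ-Independence
      (∀ (m m' : ∀ j, M j) (l : Λ),
          (∃ (ob : ∀ j, O j) (l' : Λ), h m' ob l') →
          (∃ ob : ∀ j, O j, h m ob l) →
          ∃ ob : ∀ j, O j, h m' ob l) ∧
      -- Locality
      (∀ (m : ∀ j, M j) (o : ∀ j, O j) (l : Λ),
          (∃ ob : ∀ j, O j, h m ob l) →
          (∀ i : Fin n, ∃ (m' : ∀ j, M j) (o' : ∀ j, O j),
              m' i = m i ∧ o' i = o i ∧ h m' o' l) →
          h m o l) ∧
      -- h realizes e
      (∀ (m : ∀ j, M j) (o : ∀ j, O j), e m o ↔ ∃ l : Λ, h m o l))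
    ↔
    -- e is a union of total strongly deterministic models
    (∃ (Λ : Type) (f : Λ → ∀ i, M i → O i),
      (∀ (m : ∀ i, M i) (o : ∀ i, O i),
          e m o ↔ ∃ l : Λ, (fun i => f l i (m i)) = o) ∧
      -- the graph of each f_λ is contained in e
      (∀ (l : Λ) (m : ∀ i, M i), e m (fun i => f l i (m i)))) :=
  stmt_18_general M O e htot
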